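/- Let P be a finite poset of order n with a maximum chain of size |C|. Then n - |C| ≤ (ln 2) · n · H(\bar P), where H(\bar P) is the entropy of the incomparability graph of P. -/

import Mathlib

open Finset

variable {V : Type*} [Fintype V] [DecidableEq V]

/-- The incomparability graph of a poset. -/
def incompGraph (V : Type*) [PartialOrder V] : SimpleGraph V where
  Adj x y := x ≠ y ∧ ¬ x ≤ y ∧ ¬ y ≤ x
  symm := ⟨by rintro x y ⟨hne, h1, h2⟩; exact ⟨hne.symm, h2, h1⟩⟩
  loopless := ⟨by rintro x ⟨hne, -, -⟩; exact hne rfl⟩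

/-- The stable set polytope of a graph. -/
def STAB (G : SimpleGraph V) : Set (V → ℝ) :=
  convexHull ℝ {χ : V → ℝ | ∃ S : Finset V,
    (∀ u ∈ S, ∀ v ∈ S, ¬ G.Adj u v) ∧ χ = fun v => if v ∈ S then (1 : ℝ) else 0}

/-- The entropy of a graph: the infimum of `-(1/n) ∑ log₂ x_v` over `x ∈ STAB(G)`
with positive coordinates. -/
noncomputable def graphEntropy (G : SimpleGraph V) : ℝ :=
  sInf {h : ℝ | ∃ x ∈ STAB G, (∀ v, 0 < x v) ∧
    h = -(1 / (Fintype.card V : ℝ)) * ∑ v, Real.logb 2 (x v)}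

/-! Independent sets of the incomparability graph are chains, so every point of the stable set
polytope has coordinate sum at most `|C|`. Jensen's inequality for `log` then gives
`H(P̄) ≥ log₂ (n / |C|)`, i.e. `|C| ≥ 2 ^ (-H(P̄)) n`, and `1 - 2 ^ (-x) ≤ (ln 2) x` finishes. -/

theorem isChain_of_isIndepSet_incompGraph {α : Type*} [PartialOrder α] {s : Set α}
    (hs : (incompGraph α).IsIndepSet s) : IsChain (· ≤ ·) s := by
  intro u hu v hv huv
  by_contra h
  push Not at h
  exact hs hu hv huv ⟨huv, h.1, h.2⟩

theorem sum_log_le_card_mul_log_mean {ι : Type*} [Fintype ι] [Nonempty ι] {x : ι → ℝ}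
    (hx : ∀ i, 0 < x i) :
    ∑ i, Real.log (x i) ≤ Fintype.card ι * Real.log ((∑ i, x i) / Fintype.card ι) := by
  have hn : (0 : ℝ) < Fintype.card ι := by exact_mod_cast Fintype.card_pos
  have jensen := strictConcaveOn_log_Ioi.concaveOn.le_map_sum (t := univ)
    (w := fun _ => (Fintype.card ι : ℝ)⁻¹) (p := x) (fun _ _ => by positivity)
    (by simp [hn.ne']) (fun i _ => hx i)
  simp only [smul_eq_mul, ← mul_sum] at jensen
  rw [inv_mul_eq_div, div_le_iff₀' hn] at jensen
  rwa [div_eq_inv_mul]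

theorem one_sub_two_rpow_neg_le (x : ℝ) : 1 - (2 : ℝ) ^ (-x) ≤ Real.log 2 * x := by
  have := Real.add_one_le_exp (-(Real.log 2 * x))
  rw [Real.rpow_def_of_pos two_pos, mul_neg]
  linarith

theorem sum_le_of_mem_STAB (G : SimpleGraph V) {k : ℝ}
    (hk : ∀ S : Finset V, G.IsIndepSet (S : Set V) → (S.card : ℝ) ≤ k)
    {x : V → ℝ} (hx : x ∈ STAB G) : ∑ v, x v ≤ k := by
  refine convexHull_min ?_ (convex_halfSpace_le ?_ k) hx
  · rintro _ ⟨S, hS, rfl⟩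
    simpa [Finset.sum_ite_mem] using hk S fun u hu v hv _ => hS u hu v hv
  · exact ⟨fun a b => sum_add_distrib, fun c a => by simp [mul_sum]⟩

theorem const_inv_card_mem_STAB [Nonempty V] (G : SimpleGraph V) :
    (fun _ => (Fintype.card V : ℝ)⁻¹) ∈ STAB G := by
  have hsingleton : ∀ u : V, (fun v => if v ∈ ({u} : Finset V) then (1 : ℝ) else 0) ∈
      {χ : V → ℝ | ∃ S : Finset V, (∀ a ∈ S, ∀ b ∈ S, ¬ G.Adj a b) ∧
        χ = fun v => if v ∈ S then (1 : ℝ) else 0} := by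
    refine fun u => ⟨{u}, ?_, rfl⟩
    simp
  have hcenter := Finset.centerMass_mem_convexHull univ (w := fun _ => (1 : ℝ))
    (fun _ _ => zero_le_one) (by simp [Fintype.card_pos]) (fun u _ => hsingleton u)
  have hconst : univ.centerMass (fun _ => (1 : ℝ))
      (fun u v => if v ∈ ({u} : Finset V) then (1 : ℝ) else 0) =
        fun _ => (Fintype.card V : ℝ)⁻¹ := by
    funext v
    simp [Finset.centerMass]
  rw [← hconst]
  exact hcenter

theorem logb_card_div_le_graphEntropy [Nonempty V] (G : SimpleGraph V) {k : ℝ}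
    (hk : ∀ S : Finset V, G.IsIndepSet (S : Set V) → (S.card : ℝ) ≤ k) :
    Real.logb 2 (Fintype.card V / k) ≤ graphEntropy G := by
  set n : ℝ := (Fintype.card V : ℝ)
  have hn : 0 < n := Nat.cast_pos.mpr Fintype.card_pos
  refine le_csInf ⟨_, _, const_inv_card_mem_STAB G, fun _ => by positivity, rfl⟩ ?_
  rintro _ ⟨x, hx, hxpos, rfl⟩
  set s := ∑ v, x v
  have hs : 0 < s := sum_pos (fun v _ => hxpos v) univ_nonempty
  have hsk : s ≤ k := sum_le_of_mem_STAB G hk hx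
  have hjensen : (∑ v, Real.log (x v)) / n ≤ Real.log (s / n) :=
    (div_le_iff₀' hn).mpr (sum_log_le_card_mul_log_mean hxpos)
  calc Real.logb 2 (n / k)
      ≤ Real.logb 2 (n / s) := by gcongr; exacts [one_lt_two, div_pos hn (hs.trans_le hsk)]
    _ = -(Real.log (s / n) / Real.log 2) := by rw [← Real.logb, ← Real.logb_inv, inv_div]
    _ ≤ -((∑ v, Real.log (x v)) / n / Real.log 2) := by gcongr
    _ = -(1 / n) * ∑ v, Real.logb 2 (x v) := by
      simp only [Real.logb, ← sum_div]
      ring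

theorem card_mul_two_rpow_neg_graphEntropy_le [Nonempty V] (G : SimpleGraph V) {k : ℝ}
    (hk : ∀ S : Finset V, G.IsIndepSet (S : Set V) → (S.card : ℝ) ≤ k) :
    (Fintype.card V : ℝ) * 2 ^ (-graphEntropy G) ≤ k := by
  have hk1 : 1 ≤ k := by
    obtain ⟨v⟩ := ‹Nonempty V›
    simpa using hk {v} (by simp)
  calc (Fintype.card V : ℝ) * 2 ^ (-graphEntropy G)
      ≤ Fintype.card V * 2 ^ (-Real.logb 2 (Fintype.card V / k)) := by
        gcongr
        · norm_num
        · exact logb_card_div_le_graphEntropy G hk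
    _ = k := by
      rw [Real.rpow_neg zero_le_two, Real.rpow_logb two_pos (by norm_num) (by positivity)]
      field_simp

theorem card_sub_max_chain_le_general [PartialOrder V] (C : Finset V)
    (hmax : ∀ D : Finset V, IsChain (· ≤ ·) (D : Set V) → D.card ≤ C.card) :
    (Fintype.card V : ℝ) - (C.card : ℝ) ≤
      Real.log 2 * (Fintype.card V : ℝ) * graphEntropy (incompGraph V) := by
  rcases isEmpty_or_nonempty V with _ | _
  · simp [Finset.eq_empty_of_isEmpty C]
  have hindep : ∀ S : Finset V, (incompGraph V).IsIndepSet (S : Set V) →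
      (S.card : ℝ) ≤ C.card := fun S hS =>
    mod_cast hmax S (isChain_of_isIndepSet_incompGraph hS)
  have hC := card_mul_two_rpow_neg_graphEntropy_le _ hindep
  calc (Fintype.card V : ℝ) - C.card
      ≤ Fintype.card V * (1 - 2 ^ (-graphEntropy (incompGraph V))) := by linarith
    _ ≤ Fintype.card V * (Real.log 2 * graphEntropy (incompGraph V)) := by
      gcongr
      exact one_sub_two_rpow_neg_le _
    _ = Real.log 2 * Fintype.card V * graphEntropy (incompGraph V) := by ring

/-- For a finite poset `P` of order `n` with maximum chain `C`,
`n - |C| ≤ (ln 2) · n · H(P̄)`. -/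
theorem card_sub_max_chain_le [PartialOrder V] (C : Finset V)
    (hC : IsChain (· ≤ ·) (C : Set V))
    (hmax : ∀ D : Finset V, IsChain (· ≤ ·) (D : Set V) → D.card ≤ C.card) :
    (Fintype.card V : ℝ) - (C.card : ℝ) ≤
      Real.log 2 * (Fintype.card V : ℝ) * graphEntropy (incompGraph V) :=
  card_sub_max_chain_le_general C hmax
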